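/- arXiv:1002.1833 — 3 statements merged into one kernel-verified Lean document; each statement's English description precedes it below -/
import Mathlib

section
/- First-order pattern-probing lemma: let P be a program without extra variables, and for each m ≥ 0 and symbol h let h_m be a fresh constructor of arity m. Define the map t ↦ t̂ on partial patterns by X̂ = X, ⊥̂ = bot (bot a fresh 0-ary constructor), and (h t1…tm)^ = h_m t̂1 … t̂m; then t̂ is always a first-order pattern. For each partial pattern t let g_t be a fresh unary function symbol with rules g_X U → U, g_⊥ X → bot, and g_{(h t1…tm)} (h X1…Xm) → h_m (g_{t1} X1) … (g_{tm} Xm), and set P' = P ⊎ P_{g_t}. Then P' is a safe extension of (P, e), and for every expression e and partial pattern t built with the signature of P: t ∈ ⟦e⟧^P if and only if t̂ ∈ ⟦g_t e⟧^{P'}. -/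
/-- A signature: function symbols and constructor symbols, each with an arity. -/
structure Sig where
  FS : Type
  CS : Type
  arityF : FS → ℕ
  arityC : CS → ℕ

/-- Applicative partial expressions over a signature.  Variables are natural
numbers and `bot` is the distinguished 0-ary constructor `⊥`. -/
inductive Exp (σ : Sig) : Type where
  | var : ℕ → Exp σ
  | fn : σ.FS → Exp σ
  | cn : σ.CS → Exp σ
  | bot : Exp σ
  | app : Exp σ → Exp σ → Exp σ

variable {σ : Sig}

/-- `applyList e [e1, …, en]` is the curried application `e e1 … en`. -/
def applyList (e : Exp σ) (es : List (Exp σ)) : Exp σ := es.foldl Exp.app e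

/-- Partial patterns `Pat_⊥`. -/
inductive IsPPat : Exp σ → Prop where
  | var (x : ℕ) : IsPPat (Exp.var x)
  | bot : IsPPat (Exp.bot : Exp σ)
  | capp (c : σ.CS) (ts : List (Exp σ)) (har : ts.length ≤ σ.arityC c)
      (hts : ∀ t ∈ ts, IsPPat t) : IsPPat (applyList (Exp.cn c) ts)
  | fapp (f : σ.FS) (ts : List (Exp σ)) (har : ts.length < σ.arityF f)
      (hts : ∀ t ∈ ts, IsPPat t) : IsPPat (applyList (Exp.fn f) ts)

/-- The constructor `⊥` does not occur in the expression. -/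
def BotFree : Exp σ → Prop
  | .bot => False
  | .app a b => BotFree a ∧ BotFree b
  | _ => True

/-- Total patterns `Pat`. -/
def IsPat (t : Exp σ) : Prop := IsPPat t ∧ BotFree t

/-- First-order patterns `FOPat`. -/
inductive IsFOPat : Exp σ → Prop where
  | var (x : ℕ) : IsFOPat (Exp.var x)
  | capp (c : σ.CS) (ts : List (Exp σ)) (har : ts.length = σ.arityC c)
      (hts : ∀ t ∈ ts, IsFOPat t) : IsFOPat (applyList (Exp.cn c) ts)

/-- The list of occurrences of variables in an expression. -/
def occVars : Exp σ → List ℕ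
  | .var x => [x]
  | .app a b => occVars a ++ occVars b
  | _ => []

/-- Applying a substitution to an expression. -/
def subst (θ : ℕ → Exp σ) : Exp σ → Exp σ
  | .var x => θ x
  | .fn f => .fn f
  | .cn c => .cn c
  | .bot => .bot
  | .app a b => .app (subst θ a) (subst θ b)

/-- Partial-pattern substitutions `PSubst_⊥`. -/
def PSub (θ : ℕ → Exp σ) : Prop := ∀ x, IsPPat (θ x)

/-- A program rule `f t1 … tn → r` (the left-hand side is `f` applied to `lhs`). -/
structure Rule (σ : Sig) where
  fn : σ.FS
  lhs : List (Exp σ)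
  rhs : Exp σ

/-- Well-formedness of a rule: `f` is applied to as many arguments as its arity,
the arguments form a linear tuple of total patterns. -/
def Rule.WF (r : Rule σ) : Prop :=
  r.lhs.length = σ.arityF r.fn ∧ (∀ t ∈ r.lhs, IsPat t) ∧
    (r.lhs.flatMap occVars).Nodup

/-- The rule has no extra variables: all variables of the right-hand side occur
in the left-hand side. -/
def Rule.NoExtra (r : Rule σ) : Prop :=
  ∀ x ∈ occVars r.rhs, x ∈ r.lhs.flatMap occVars

abbrev Program (σ : Sig) := Set (Rule σ)

/-- A program without extra variables, all whose rules are well formed. -/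
def WFProg (P : Program σ) : Prop := ∀ r ∈ P, r.WF ∧ r.NoExtra

/-- `h ∈ Σ` (a function symbol, a constructor symbol, or `⊥`). -/
def IsSymb : Exp σ → Prop
  | .fn _ => True
  | .cn _ => True
  | .bot => True
  | _ => False

/-- HOCRWL derivation trees for statements `e ⇒ t`, with rules
(B), (RR), (DC) and (OR). -/
inductive DTree (P : Program σ) : Exp σ → Exp σ → Type where
  | bot (e : Exp σ) : DTree P e Exp.bot
  | rr (x : ℕ) : DTree P (Exp.var x) (Exp.var x)
  | dc (h : Exp σ) (es ts : List (Exp σ)) (hsym : IsSymb h)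
      (hlen : es.length = ts.length) (hpat : IsPPat (applyList h ts))
      (ds : ∀ p ∈ es.zip ts, DTree P p.1 p.2) :
      DTree P (applyList h es) (applyList h ts)
  | opr (r : Rule σ) (hr : r ∈ P) (θ : ℕ → Exp σ) (hθ : PSub θ)
      (es as : List (Exp σ)) (t : Exp σ) (hlen : es.length = r.lhs.length)
      (ds : ∀ p ∈ es.zip (r.lhs.map (subst θ)), DTree P p.1 p.2)
      (d : DTree P (applyList (subst θ r.rhs) as) t) :
      DTree P (applyList (Exp.fn r.fn) (es ++ as)) t

/-- `P ⊢ e ⇒ t` is derivable in the HOCRWL proof calculus. -/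
def Deriv (P : Program σ) (e t : Exp σ) : Prop := Nonempty (DTree P e t)

/-- The HOCRWL denotation `⟦e⟧^P = { t ∈ Pat_⊥ | P ⊢ e ⇒ t }`. -/
def den (P : Program σ) (e : Exp σ) : Set (Exp σ) := {t | IsPPat t ∧ Deriv P e t}

/-- Observations: total patterns in the denotation. -/
def Obs (P : Program σ) (e : Exp σ) : Set (Exp σ) := {t | t ∈ den P e ∧ BotFree t}

/-- First-order observations: first-order patterns in the denotation. -/
def ObsFO (P : Program σ) (e : Exp σ) : Set (Exp σ) := {t | t ∈ den P e ∧ IsFOPat t}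

/-- Contexts `C ::= [ ] | C e | e C`. -/
inductive Cntxt (σ : Sig) : Type where
  | hole : Cntxt σ
  | appL : Cntxt σ → Exp σ → Cntxt σ
  | appR : Exp σ → Cntxt σ → Cntxt σ

/-- Filling the hole of a context with an expression. -/
def Cntxt.fill : Cntxt σ → Exp σ → Exp σ
  | .hole, e => e
  | .appL C e', e => .app (C.fill e) e'
  | .appR e' C, e => .app e' (C.fill e)

/-- Function symbols occurring in an expression. -/
def expFS : Exp σ → Set σ.FS
  | .fn f => {f}
  | .app a b => expFS a ∪ expFS b
  | _ => ∅

/-- Function symbols occurring in a rule. -/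
def ruleFS (r : Rule σ) : Set σ.FS :=
  insert r.fn ((⋃ t ∈ r.lhs, expFS t) ∪ expFS r.rhs)

/-- Function symbols occurring in a program. -/
def progFS (P : Program σ) : Set σ.FS := ⋃ r ∈ P, ruleFS r

/-- Function symbols defined by a program (roots of left-hand sides). -/
def defs (P : Program σ) : Set σ.FS := Rule.fn '' P

/-- `P'` is a safe extension of `(P, e)`: `P' = P ⊎ P''` where `P''` defines no
function symbol occurring in `P` or in `e`. -/
def SafeExt (P P' : Program σ) (e : Exp σ) : Prop :=
  ∃ P'' : Program σ, P' = P ∪ P'' ∧ Disjoint P P'' ∧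
    Disjoint (defs P'') (expFS e ∪ progFS P)

/-- `e ∼ₙ e'` : `n`-extensional equivalence. -/
def ExtEquiv (P : Program σ) (n : ℕ) (e e' : Exp σ) : Prop :=
  ∀ es : List (Exp σ), es.length = n →
    den P (applyList e es) = den P (applyList e' es)

/-- The signature of `P` extended with a fresh 0-ary constructor `bot`, fresh
constructors `h_m` of arity `m` for every symbol `h ∈ FS ∪ CS` and every `m`,
and a fresh unary function symbol `g_t` for every (partial pattern) `t`. -/
def extSigFO (σ : Sig) : Sig where
  FS := σ.FS ⊕ Exp σ
  CS := (σ.CS ⊕ Unit) ⊕ ((σ.FS ⊕ σ.CS) × ℕ)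
  arityF := Sum.elim σ.arityF fun _ => 1
  arityC := Sum.elim (Sum.elim σ.arityC fun _ => 0) fun p => p.2

/-- The embedding of expressions of the original signature into the
extended one. -/
def embedFO : Exp σ → Exp (extSigFO σ)
  | .var x => .var x
  | .fn f => .fn (.inl f)
  | .cn c => .cn (.inl (.inl c))
  | .bot => .bot
  | .app a b => .app (embedFO a) (embedFO b)

/-- Auxiliary for `t ↦ t̂`: `hatFOAux e n` translates `e` knowing it is applied
to `n` further arguments, so that a head symbol `h` applied to `m` arguments
in total becomes the fresh constructor `h_m`. -/
def hatFOAux : Exp σ → ℕ → Exp (extSigFO σ)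
  | .var x, _ => .var x
  | .bot, _ => .cn (.inl (.inr ()))
  | .fn f, n => .cn (.inr (.inl f, n))
  | .cn c, n => .cn (.inr (.inr c, n))
  | .app a b, n => .app (hatFOAux a (n + 1)) (hatFOAux b 0)

/-- The transformation `t ↦ t̂`: `X̂ = X`, `⊥̂ = bot`,
`(h t1…tm)^ = h_m t̂1 … t̂m`. -/
def hatFO (t : Exp σ) : Exp (extSigFO σ) := hatFOAux t 0

def embedRuleFO (r : Rule σ) : Rule (extSigFO σ) :=
  ⟨.inl r.fn, r.lhs.map embedFO, embedFO r.rhs⟩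

def embedProgFO (P : Program σ) : Program (extSigFO σ) := embedRuleFO '' P

/-- The fresh function symbol `g_t`, as an expression. -/
def gEFO (t : Exp σ) : Exp (extSigFO σ) := .fn (.inr t)

/-- A symbol `h ∈ FS ∪ CS` as an expression. -/
def symExp : σ.FS ⊕ σ.CS → Exp σ := Sum.elim Exp.fn Exp.cn

/-- The rule `g_{h t1…tm} (h X1…Xm) → h_m (g_{t1} X1) … (g_{tm} Xm)`. -/
def gAppRuleFO (h : σ.FS ⊕ σ.CS) (ts : List (Exp σ)) : Rule (extSigFO σ) where
  fn := .inr (applyList (symExp h) ts)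
  lhs := [applyList (embedFO (symExp h)) ((List.range ts.length).map Exp.var)]
  rhs := applyList (Exp.cn (.inr (h, ts.length)))
      (ts.mapIdx fun i t => Exp.app (gEFO t) (Exp.var i))

/-- The program `P_{g_t}` consisting of the rules `g_X U → U`,
`g_⊥ X → bot` and `g_{h t1…tm} (h X1…Xm) → h_m (g_{t1} X1) … (g_{tm} Xm)`. -/
def PgFO (σ : Sig) : Program (extSigFO σ) :=
  {r | (∃ x : ℕ, r = ⟨.inr (.var x), [.var 0], .var 0⟩) ∨
       r = ⟨.inr .bot, [.var 0], .cn (.inl (.inr ()))⟩ ∨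
       ∃ (h : σ.FS ⊕ σ.CS) (ts : List (Exp σ)),
         IsPPat (applyList (symExp h) ts) ∧ r = gAppRuleFO h ts}

/-!
Forward direction, by induction on `t`: the derivation `e ⇒ t` embeds into `P'`, so the rule
of `g_t` fires with its variables bound to the arguments `tᵢ` of `t`, and `g_{tᵢ} tᵢ ⇒ t̂ᵢ`
holds by induction because every partial pattern reduces to itself.

Backward direction: inverting `g_t q ⇒ t̂` through the unique rule of `g_t` gives
`q ⇒ (h X₁ … Xₘ)θ` and `g_{tᵢ} (Xᵢθ) ⇒ t̂ᵢ`, hence `Xᵢθ ⇒ tᵢ` by induction. A partial pattern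
only reduces to its approximations (`Approx t p`, i.e. `t ⊑ p`: `t` is `p` with some subterms
replaced by `⊥`), its spines being too short to fire a rule. So `t ⊑ (h X₁ … Xₘ)θ`, and
derivable values are closed under approximation: `q ⇒ t` in `P'`.
It remains that `P'` is conservative over `P` on expressions of the original signature: the new
rules only define the fresh `g_t`, and since rules have no extra variables, every instance of a
rule of `P` that fires on an embedded expression is itself embedded.
-/

open List (Forall₂)

lemma forall₂_of_common_right {α β γ : Type*} {R : α → β → Prop} {S : γ → β → Prop}
    {T : α → γ → Prop} (h : ∀ a b c, R a b → S c b → T a c) :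
    ∀ {l₁ l₂ l₃}, Forall₂ R l₁ l₂ → Forall₂ S l₃ l₂ → Forall₂ T l₁ l₃
  | _, _, _, .nil, .nil => .nil
  | _, _, _, .cons hr hR, .cons hs hS => .cons (h _ _ _ hr hs) (forall₂_of_common_right h hR hS)

lemma forall₂_iff_getElem {α β : Type*} {R : α → β → Prop} {l₁ : List α} {l₂ : List β} :
    Forall₂ R l₁ l₂ ↔ l₁.length = l₂.length ∧
      ∀ (i : ℕ) (h₁ : i < l₁.length) (h₂ : i < l₂.length), R l₁[i] l₂[i] := by
  simp [List.forall₂_iff_get]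

lemma List.Forall₂.exists_eq_map {α β γ : Type*} {R : α → γ → Prop} {f : γ → β} :
    ∀ {l : List α} {l' : List β}, Forall₂ (fun a b => ∃ c, b = f c ∧ R a c) l l' →
      ∃ l₀, l' = l₀.map f ∧ Forall₂ R l l₀
  | _, _, .nil => ⟨[], rfl, .nil⟩
  | _, _, .cons ⟨c, rfl, hc⟩ h =>
      let ⟨l₀, hl₀, h₀⟩ := h.exists_eq_map
      ⟨c :: l₀, by rw [hl₀, List.map_cons], .cons hc h₀⟩

/-! ### Application spines -/

namespace Exp

def IsAtom : Exp σ → Prop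
  | .app _ _ => False
  | _ => True

def head : Exp σ → Exp σ
  | .app a _ => head a
  | e => e

def args : Exp σ → List (Exp σ)
  | .app a b => args a ++ [b]
  | _ => []

lemma isAtom_head (e : Exp σ) : e.head.IsAtom := by
  induction e with
  | app _ _ ih _ => exact ih
  | _ => trivial

end Exp

@[simp] lemma applyList_nil (e : Exp σ) : applyList e [] = e := rfl

@[simp] lemma applyList_cons (e a : Exp σ) (l : List (Exp σ)) :
    applyList e (a :: l) = applyList (.app e a) l := rfl

@[simp] lemma applyList_concat (e : Exp σ) (l : List (Exp σ)) (a : Exp σ) :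
    applyList e (l ++ [a]) = .app (applyList e l) a :=
  List.foldl_append

lemma applyList_head_args (e : Exp σ) : applyList e.head e.args = e := by
  induction e with
  | app a b iha _ => rw [Exp.head, Exp.args, applyList_concat, iha]
  | _ => rfl

lemma head_applyList {h : Exp σ} (hh : h.IsAtom) (l : List (Exp σ)) :
    (applyList h l).head = h := by
  induction l using List.reverseRecOn with
  | nil => cases h <;> first | rfl | exact hh.elim
  | append_singleton l a ih => rwa [applyList_concat, Exp.head]

lemma args_applyList {h : Exp σ} (hh : h.IsAtom) (l : List (Exp σ)) :
    (applyList h l).args = l := by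
  induction l using List.reverseRecOn with
  | nil => cases h <;> first | rfl | exact hh.elim
  | append_singleton l a ih => rw [applyList_concat, Exp.args, ih]

lemma applyList_inj {h h' : Exp σ} {l l' : List (Exp σ)} (he : applyList h l = applyList h' l')
    (hh : h.IsAtom) (hh' : h'.IsAtom) : h = h' ∧ l = l' :=
  ⟨by simpa only [head_applyList hh, head_applyList hh'] using congrArg Exp.head he,
    by simpa only [args_applyList hh, args_applyList hh'] using congrArg Exp.args he⟩

lemma IsSymb.isAtom {h : Exp σ} (hs : IsSymb h) : h.IsAtom := by
  cases h <;> trivial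

lemma subst_applyList (θ : ℕ → Exp σ) (e : Exp σ) (l : List (Exp σ)) :
    subst θ (applyList e l) = applyList (subst θ e) (l.map (subst θ)) := by
  induction l generalizing e with
  | nil => rfl
  | cons a l ih => exact ih (.app e a)

lemma subst_congr {θ θ' : ℕ → Exp σ} {u : Exp σ} (h : ∀ x ∈ occVars u, θ x = θ' x) :
    subst θ u = subst θ' u := by
  induction u with
  | var x => exact h x (List.mem_singleton_self x)
  | app a b iha ihb =>
      simp only [occVars, List.mem_append] at h
      simp only [subst, iha fun x hx => h x (.inl hx), ihb fun x hx => h x (.inr hx)]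
  | _ => rfl

/-! ### Partial patterns and their approximations -/

def PPatHead : Exp σ → ℕ → Prop
  | .var _, n | .bot, n => n = 0
  | .cn c, n => n ≤ σ.arityC c
  | .fn f, n => n < σ.arityF f
  | .app _ _, _ => False

lemma PPatHead.of_succ {h : Exp σ} {n : ℕ} (hn : PPatHead h (n + 1)) : PPatHead h n := by
  cases h <;> simp only [PPatHead] at hn ⊢ <;> omega

lemma isPPat_applyList_iff {h : Exp σ} (hh : h.IsAtom) {l : List (Exp σ)} :
    IsPPat (applyList h l) ↔ PPatHead h l.length ∧ ∀ a ∈ l, IsPPat a := by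
  constructor
  · generalize he : applyList h l = e
    rintro (x | _ | ⟨c, ts, har, hts⟩ | ⟨f, ts, har, hts⟩)
    · obtain ⟨rfl, rfl⟩ := applyList_inj (h' := .var x) (l' := []) he hh trivial
      simp [PPatHead]
    · obtain ⟨rfl, rfl⟩ := applyList_inj (h' := .bot) (l' := []) he hh trivial
      simp [PPatHead]
    · obtain ⟨rfl, rfl⟩ := applyList_inj he hh trivial
      exact ⟨har, hts⟩
    · obtain ⟨rfl, rfl⟩ := applyList_inj he hh trivial
      exact ⟨har, hts⟩
  · rintro ⟨hhead, hl⟩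
    cases h with
    | var x => obtain rfl := List.eq_nil_of_length_eq_zero hhead; exact .var x
    | bot => obtain rfl := List.eq_nil_of_length_eq_zero hhead; exact .bot
    | cn c => exact .capp c l hhead hl
    | fn f => exact .fapp f l hhead hl
    | app => exact hhead.elim

lemma isPPat_iff (e : Exp σ) :
    IsPPat e ↔ PPatHead e.head e.args.length ∧ ∀ a ∈ e.args, IsPPat a := by
  conv_lhs => rw [← applyList_head_args e]
  exact isPPat_applyList_iff e.isAtom_head

lemma IsPPat.app_left {a b : Exp σ} (h : IsPPat (.app a b)) : IsPPat a := by
  rw [isPPat_iff] at h ⊢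
  simp only [Exp.head, Exp.args, List.length_append, List.length_singleton, List.mem_append]
    at h
  exact ⟨h.1.of_succ, fun a ha => h.2 a (.inl ha)⟩

lemma not_isPPat_app_bot (b : Exp σ) : ¬ IsPPat (.app .bot b) := by
  simpa [PPatHead] using (isPPat_applyList_iff (h := .bot) trivial (l := [b])).not

lemma IsFOPat.isPPat {t : Exp σ} (ht : IsFOPat t) : IsPPat t := by
  induction ht with
  | var x => exact .var x
  | capp c ts har _ ih => exact .capp c ts har.le ih

@[elab_as_elim]
lemma IsPPat.induction_symExp {motive : Exp σ → Prop} (var : ∀ x, motive (.var x))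
    (bot : motive .bot)
    (app : ∀ h ts, IsPPat (applyList (symExp h) ts) → (∀ t ∈ ts, motive t) →
      motive (applyList (symExp h) ts))
    {t : Exp σ} (ht : IsPPat t) : motive t := by
  induction ht with
  | var x => exact var x
  | bot => exact bot
  | capp c ts har hts ih => exact app (.inr c) ts (.capp c ts har hts) ih
  | fapp f ts har hts ih => exact app (.inl f) ts (.fapp f ts har hts) ih

inductive Approx : Exp σ → Exp σ → Prop
  | bot (e : Exp σ) : Approx .bot e
  | refl (e : Exp σ) : Approx e e
  | app {a a' b b' : Exp σ} : Approx a a' → Approx b b' → Approx (.app a b) (.app a' b')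

lemma approx_applyList {h h' : Exp σ} {l l' : List (Exp σ)} (hh : Approx h h')
    (hl : Forall₂ Approx l l') : Approx (applyList h l) (applyList h' l') := by
  induction hl generalizing h h' with
  | nil => exact hh
  | cons ha _ ih => exact ih (.app hh ha)

lemma Approx.eq_of_var {x : ℕ} {u : Exp σ} (h : Approx (.var x) u) : u = .var x := by
  cases h; rfl

lemma eq_bot_or_applyList_of_approx {h : Exp σ} (hh : h.IsAtom) {l' : List (Exp σ)}
    {t : Exp σ} (hle : Approx t (applyList h l')) (ht : IsPPat t) :
    t = .bot ∨ ∃ l, t = applyList h l ∧ Forall₂ Approx l l' := by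
  induction l' using List.reverseRecOn generalizing t with
  | nil =>
      cases hle with
      | bot => exact .inl rfl
      | refl => exact .inr ⟨[], rfl, .nil⟩
      | app => exact hh.elim
  | append_singleton l' a' ih =>
      rw [applyList_concat] at hle
      cases hle with
      | bot => exact .inl rfl
      | refl =>
          exact .inr ⟨l' ++ [a'], (applyList_concat ..).symm,
            List.forall₂_same.2 fun e _ => .refl e⟩
      | @app u _ v _ hu hv =>
          obtain rfl | ⟨l, rfl, hl⟩ := ih hu ht.app_left
          · exact (not_isPPat_app_bot v ht).elim
          · exact .inr ⟨l ++ [v], by simp, List.rel_append hl (.cons hv .nil)⟩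

/-! ### The proof calculus -/

namespace Deriv

variable {P : Program σ}

lemma bot (e : Exp σ) : Deriv P e .bot := ⟨.bot e⟩

lemma rr (x : ℕ) : Deriv P (.var x) (.var x) := ⟨.rr x⟩

lemma dc {h : Exp σ} {es ts : List (Exp σ)} (hs : IsSymb h) (ht : IsPPat (applyList h ts))
    (hd : Forall₂ (Deriv P) es ts) : Deriv P (applyList h es) (applyList h ts) := by
  obtain ⟨hlen, hd⟩ := List.forall₂_iff_zip.1 hd
  exact ⟨.dc h es ts hs hlen ht fun p hp => (hd hp).some⟩

lemma opr {r : Rule σ} (hr : r ∈ P) {θ : ℕ → Exp σ} (hθ : PSub θ) {es as : List (Exp σ)}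
    {t : Exp σ} (hes : Forall₂ (Deriv P) es (r.lhs.map (subst θ)))
    (hd : Deriv P (applyList (subst θ r.rhs) as) t) :
    Deriv P (applyList (.fn r.fn) (es ++ as)) t := by
  obtain ⟨hlen, hes⟩ := List.forall₂_iff_zip.1 hes
  exact ⟨.opr r hr θ hθ es as t (by simpa using hlen) (fun p hp => (hes hp).some) hd.some⟩

@[elab_as_elim]
lemma induction {motive : Exp σ → Exp σ → Prop}
    (bot : ∀ e, motive e .bot) (rr : ∀ x, motive (.var x) (.var x))
    (dc : ∀ (h : Exp σ) (es ts : List (Exp σ)), IsSymb h → IsPPat (applyList h ts) →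
      Forall₂ (Deriv P) es ts → Forall₂ motive es ts → motive (applyList h es) (applyList h ts))
    (opr : ∀ r ∈ P, ∀ θ, PSub θ → ∀ (es as : List (Exp σ)) (t : Exp σ),
      Forall₂ (Deriv P) es (r.lhs.map (subst θ)) → Forall₂ motive es (r.lhs.map (subst θ)) →
      Deriv P (applyList (subst θ r.rhs) as) t → motive (applyList (subst θ r.rhs) as) t →
      motive (applyList (.fn r.fn) (es ++ as)) t)
    {e t : Exp σ} (hd : Deriv P e t) : motive e t := by
  obtain ⟨d⟩ := hd
  induction d with
  | bot e => exact bot e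
  | rr x => exact rr x
  | dc h es ts hs hlen ht ds ih =>
      exact dc h es ts hs ht (List.forall₂_iff_zip.2 ⟨hlen, fun hp => ⟨ds _ hp⟩⟩)
        (List.forall₂_iff_zip.2 ⟨hlen, fun hp => ih _ hp⟩)
  | opr r hr θ hθ es as t hlen ds d ih ihd =>
      have hlen' : es.length = (r.lhs.map (subst θ)).length := by simpa using hlen
      exact opr r hr θ hθ es as t (List.forall₂_iff_zip.2 ⟨hlen', fun hp => ⟨ds _ hp⟩⟩)
        (List.forall₂_iff_zip.2 ⟨hlen', fun hp => ih _ hp⟩) ⟨d⟩ ihd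

lemma mono {Q : Program σ} (hPQ : P ⊆ Q) {e t : Exp σ} (hd : Deriv P e t) : Deriv Q e t := by
  refine Deriv.induction (fun e => .bot e) (fun x => .rr x) (fun h es ts hs ht _ ih => ?_)
    (fun r hr θ hθ es as t _ ih _ ihd => ?_) hd
  · exact .dc hs ht ih
  · exact .opr (hPQ hr) hθ ih ihd

lemma refl {t : Exp σ} (ht : IsPPat t) : Deriv P t t := by
  induction ht with
  | var x => exact .rr x
  | bot => exact .bot _
  | capp c ts har hts ih => exact .dc trivial (.capp c ts har hts) (List.forall₂_same.2 ih)
  | fapp f ts har hts ih => exact .dc trivial (.fapp f ts har hts) (List.forall₂_same.2 ih)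

lemma of_approx {e p t : Exp σ} (hd : Deriv P e p) (hle : Approx t p) (ht : IsPPat t) :
    Deriv P e t := by
  refine Deriv.induction (motive := fun e p => ∀ t, Approx t p → IsPPat t → Deriv P e t)
    (fun e t hle _ => ?_) (fun x t hle _ => ?_) (fun h es ts hs _ _ ih t hle ht => ?_)
    (fun r hr θ hθ es as _ hes _ _ ih t hle ht => ?_) hd t hle ht
  · cases hle <;> exact .bot e
  · cases hle <;> first | exact .bot _ | exact .rr x
  · obtain rfl | ⟨l, rfl, hl⟩ := eq_bot_or_applyList_of_approx hs.isAtom hle ht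
    · exact .bot _
    have hl' := (List.forall₂_and_left l ts).2 ⟨((isPPat_applyList_iff hs.isAtom).1 ht).2, hl⟩
    exact .dc hs ht (forall₂_of_common_right (fun _ _ _ he ht => he _ ht.2 ht.1) ih hl')
  · exact .opr hr hθ hes (ih t hle ht)

lemma inv_applyList_fn {f : σ.FS} {es : List (Exp σ)} {T : Exp σ}
    (hd : Deriv P (applyList (.fn f) es) T) (hT : T ≠ .bot) (har : σ.arityF f ≤ es.length) :
    ∃ r ∈ P, r.fn = f ∧ ∃ θ, PSub θ ∧ ∃ es₁ as, es = es₁ ++ as ∧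
      Forall₂ (Deriv P) es₁ (r.lhs.map (subst θ)) ∧
      Deriv P (applyList (subst θ r.rhs) as) T := by
  refine Deriv.induction (motive := fun S T => ∀ es, S = applyList (.fn f) es → T ≠ .bot →
      σ.arityF f ≤ es.length → ∃ r ∈ P, r.fn = f ∧ ∃ θ, PSub θ ∧ ∃ es₁ as, es = es₁ ++ as ∧
        Forall₂ (Deriv P) es₁ (r.lhs.map (subst θ)) ∧ Deriv P (applyList (subst θ r.rhs) as) T)
    (fun _ _ _ hT _ => (hT rfl).elim) (fun x es he _ _ => ?_)
    (fun h es' ts hs ht hd _ es he _ har => ?_)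
    (fun r hr θ hθ es₁ as t hes _ hd _ es he _ _ => ?_) hd es rfl hT har
  · exact absurd (applyList_inj (h := .var x) (l := []) he trivial trivial).1 (by simp)
  · obtain ⟨rfl, rfl⟩ := applyList_inj he hs.isAtom trivial
    have := ((isPPat_applyList_iff hs.isAtom).1 ht).1
    simp only [PPatHead, ← hd.length_eq] at this
    omega
  · obtain ⟨hfn, rfl⟩ := applyList_inj he trivial trivial
    exact ⟨r, hr, by simpa using hfn, θ, hθ, es₁, as, rfl, hes, hd⟩

lemma inv_applyList_cn {c : σ.CS} {es : List (Exp σ)} {T : Exp σ}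
    (hd : Deriv P (applyList (.cn c) es) T) (hT : T ≠ .bot) :
    ∃ ts, T = applyList (.cn c) ts ∧ Forall₂ (Deriv P) es ts := by
  refine Deriv.induction (motive := fun S T => ∀ es, S = applyList (.cn c) es → T ≠ .bot →
      ∃ ts, T = applyList (.cn c) ts ∧ Forall₂ (Deriv P) es ts)
    (fun _ _ _ hT => (hT rfl).elim) (fun x es he _ => ?_)
    (fun h es' ts hs _ hd _ es he _ => ?_) (fun r _ _ _ _ _ _ _ _ _ _ es he _ => ?_)
    hd es rfl hT
  · exact absurd (applyList_inj (h := .var x) (l := []) he trivial trivial).1 (by simp)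
  · obtain ⟨rfl, rfl⟩ := applyList_inj he hs.isAtom trivial
    exact ⟨ts, rfl, hd⟩
  · exact absurd (applyList_inj he trivial trivial).1 (by simp)

end Deriv

lemma approx_of_deriv {P : Program σ} (hP : ∀ r ∈ P, σ.arityF r.fn ≤ r.lhs.length)
    {p t : Exp σ} (hd : Deriv P p t) (hp : IsPPat p) : Approx t p := by
  refine Deriv.induction (motive := fun p t => IsPPat p → Approx t p) (fun _ _ => .bot _)
    (fun _ _ => .refl _) (fun h es ts hs _ _ ih hp => ?_)
    (fun r hr θ _ es as _ hes _ _ _ hp => ?_) hd hp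
  · have hes := ((isPPat_applyList_iff hs.isAtom).1 hp).2
    exact approx_applyList (.refl h)
      (((List.forall₂_and_left es ts).2 ⟨hes, ih⟩).imp fun _ _ h => h.2 h.1).flip
  · -- a partial pattern has fewer arguments than any rule of its head symbol
    have har := ((isPPat_applyList_iff (h := .fn r.fn) trivial).1 hp).1
    have := hP r hr
    simp only [PPatHead, List.length_append, hes.length_eq, List.length_map] at har
    omega

/-! ### Embedding into the extended signature -/

lemma embedFO_applyList (e : Exp σ) (l : List (Exp σ)) :
    embedFO (applyList e l) = applyList (embedFO e) (l.map embedFO) := by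
  induction l generalizing e with
  | nil => rfl
  | cons a l ih => exact ih (.app e a)

lemma embedFO_subst (θ : ℕ → Exp σ) (u : Exp σ) :
    embedFO (subst θ u) = subst (embedFO ∘ θ) (embedFO u) := by
  induction u with
  | app a b iha ihb => simp only [subst, embedFO, iha, ihb]
  | _ => rfl

lemma occVars_embedFO (u : Exp σ) : occVars (embedFO u) = occVars u := by
  induction u with
  | app a b iha ihb => simp only [embedFO, occVars, iha, ihb]
  | _ => rfl

def unembedFO : Exp (extSigFO σ) → Exp σ
  | .var x => .var x
  | .fn (.inl f) => .fn f
  | .cn (.inl (.inl c)) => .cn c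
  | .app a b => .app (unembedFO a) (unembedFO b)
  | _ => .bot

lemma unembedFO_embedFO (e : Exp σ) : unembedFO (embedFO e) = e := by
  induction e with
  | app a b iha ihb => simp only [embedFO, unembedFO, iha, ihb]
  | _ => rfl

lemma embedFO_injective : Function.Injective (embedFO (σ := σ)) :=
  Function.LeftInverse.injective unembedFO_embedFO

lemma Exp.IsAtom.embedFO {h : Exp σ} (hh : h.IsAtom) : (embedFO h).IsAtom := by
  cases h <;> trivial

lemma isSymb_embedFO_iff {h : Exp σ} : IsSymb (embedFO h) ↔ IsSymb h := by
  cases h <;> exact Iff.rfl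

lemma ppatHead_embedFO_iff {h : Exp σ} {n : ℕ} : PPatHead (embedFO h) n ↔ PPatHead h n := by
  cases h <;> simp [embedFO, PPatHead, extSigFO]

lemma embedFO_eq_applyList {e : Exp σ} {h' : Exp (extSigFO σ)} {l' : List (Exp (extSigFO σ))}
    (he : embedFO e = applyList h' l') (hh' : h'.IsAtom) :
    embedFO e.head = h' ∧ l' = e.args.map embedFO := by
  rw [← applyList_head_args e, embedFO_applyList] at he
  obtain ⟨h1, h2⟩ := applyList_inj he e.isAtom_head.embedFO hh'
  exact ⟨h1, h2.symm⟩

lemma embedFO_eq_fn {h : Exp σ} {g : (extSigFO σ).FS} (he : embedFO h = .fn g) :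
    ∃ f, h = .fn f ∧ g = .inl f := by
  cases h <;> cases he
  exact ⟨_, rfl, rfl⟩

lemma isPPat_embedFO_iff {t : Exp σ} : IsPPat (embedFO t) ↔ IsPPat t := by
  constructor
  · generalize hu : embedFO t = u
    intro hp
    induction hp generalizing t with
    | var x => cases t <;> first | exact .var _ | exact .bot | simp [embedFO] at hu
    | bot => cases t <;> first | exact .bot | simp [embedFO] at hu
    | capp c ts har _ ih | fapp c ts har _ ih =>
        obtain ⟨hh, rfl⟩ := embedFO_eq_applyList hu trivial
        rw [isPPat_iff]
        refine ⟨ppatHead_embedFO_iff.1 ?_, fun a ha => ih _ (List.mem_map_of_mem ha) rfl⟩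
        rw [hh, List.length_map] at *
        exact har
  · intro hp
    induction hp with
    | var x => exact .var x
    | bot => exact .bot
    | capp c ts har _ ih | fapp c ts har _ ih =>
        rw [embedFO_applyList, isPPat_applyList_iff (by trivial), List.length_map]
        exact ⟨ppatHead_embedFO_iff.2 har, by simpa using ih⟩

lemma Deriv.embed {P : Program σ} {e t : Exp σ} (hd : Deriv P e t) :
    Deriv (embedProgFO P) (embedFO e) (embedFO t) := by
  refine Deriv.induction (fun e => .bot _) (fun x => .rr x) (fun h es ts hs ht _ ih => ?_)
    (fun r hr θ hθ es as t _ ih _ ihd => ?_) hd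
  · rw [embedFO_applyList, embedFO_applyList]
    refine .dc (isSymb_embedFO_iff.2 hs) (by rwa [← embedFO_applyList, isPPat_embedFO_iff]) ?_
    simpa using ih
  · rw [embedFO_applyList, List.map_append]
    refine Deriv.opr (P := embedProgFO P) (Set.mem_image_of_mem embedRuleFO hr)
      (θ := embedFO ∘ θ) (fun x => isPPat_embedFO_iff.2 (hθ x)) ?_ ?_
    · simpa [embedRuleFO, embedFO_subst] using ih
    · simpa [embedRuleFO, embedFO_subst, embedFO_applyList] using ihd

/-! ### Conservativity -/

open Classical in
noncomputable def unembedSubst (θ : ℕ → Exp (extSigFO σ)) (x : ℕ) : Exp σ :=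
  if θ x ∈ Set.range embedFO then unembedFO (θ x) else .bot

lemma embedFO_unembedSubst {θ : ℕ → Exp (extSigFO σ)} {x : ℕ}
    (hx : θ x ∈ Set.range embedFO) : embedFO (unembedSubst θ x) = θ x := by
  obtain ⟨v, hv⟩ := hx
  rw [unembedSubst, if_pos ⟨v, hv⟩, ← hv, unembedFO_embedFO]

lemma PSub.unembedSubst {θ : ℕ → Exp (extSigFO σ)} (hθ : PSub θ) :
    PSub (unembedSubst θ) := by
  intro x
  by_cases hx : θ x ∈ Set.range embedFO
  · rw [← isPPat_embedFO_iff, embedFO_unembedSubst hx]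
    exact hθ x
  · rw [_root_.unembedSubst, if_neg hx]
    exact .bot

lemma mem_range_of_subst_embedFO {θ : ℕ → Exp (extSigFO σ)} {p : Exp σ}
    (h : subst θ (embedFO p) ∈ Set.range embedFO) :
    ∀ x ∈ occVars p, θ x ∈ Set.range embedFO := by
  induction p with
  | var y => simpa [occVars, embedFO, subst] using h
  | app a b iha ihb =>
      obtain ⟨u, hu⟩ := h
      cases u with
      | app u₁ u₂ =>
          simp only [embedFO, subst, Exp.app.injEq] at hu
          simp only [occVars, List.mem_append]
          rintro x (hx | hx)
          exacts [iha ⟨u₁, hu.1⟩ x hx, ihb ⟨u₂, hu.2⟩ x hx]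
      | _ => simp [embedFO, subst] at hu
  | _ => simp [occVars]

lemma subst_embedFO_of_mem_range {θ : ℕ → Exp (extSigFO σ)} {p : Exp σ}
    (h : ∀ x ∈ occVars p, θ x ∈ Set.range embedFO) :
    subst θ (embedFO p) = embedFO (subst (unembedSubst θ) p) := by
  rw [embedFO_subst]
  refine subst_congr fun x hx => (embedFO_unembedSubst (h x ?_)).symm
  rwa [occVars_embedFO] at hx

lemma eq_subst_unembedSubst_of_subst_embedFO {θ : ℕ → Exp (extSigFO σ)} {p u : Exp σ}
    (hu : subst θ (embedFO p) = embedFO u) : u = subst (unembedSubst θ) p :=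
  embedFO_injective <| hu.symm.trans <|
    subst_embedFO_of_mem_range (mem_range_of_subst_embedFO ⟨u, hu.symm⟩)

lemma Rule.NoExtra.subst_embedFO_rhs {r : Rule σ} (hr : r.NoExtra) {θ : ℕ → Exp (extSigFO σ)}
    (h : ∀ p ∈ r.lhs, subst θ (embedFO p) ∈ Set.range embedFO) :
    subst θ (embedFO r.rhs) = embedFO (subst (unembedSubst θ) r.rhs) := by
  refine subst_embedFO_of_mem_range fun x hx => ?_
  obtain ⟨p, hp, hxp⟩ := List.mem_flatMap.1 (hr x hx)
  exact mem_range_of_subst_embedFO (h p hp) x hxp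

theorem Deriv.conservative {P : Program σ} (hP : ∀ r ∈ P, r.NoExtra)
    {Q : Program (extSigFO σ)} (hQ : Disjoint (defs Q) (Set.range Sum.inl)) {e : Exp σ}
    {t' : Exp (extSigFO σ)} (hd : Deriv (embedProgFO P ∪ Q) (embedFO e) t') :
    ∃ t, t' = embedFO t ∧ Deriv P e t := by
  refine Deriv.induction
    (motive := fun S T => ∀ e, S = embedFO e → ∃ t, T = embedFO t ∧ Deriv P e t)
    (fun _ e _ => ⟨.bot, rfl, .bot e⟩) (fun x e he => ?_) (fun h es ts hs hpat _ ih e he => ?_)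
    (fun r hr θ hθ es as t _ ih _ ihd e he => ?_) hd e rfl
  · cases e <;> cases he
    exact ⟨_, rfl, .rr _⟩
  · obtain ⟨rfl, rfl⟩ := embedFO_eq_applyList he.symm hs.isAtom
    obtain ⟨ts₀, rfl, hts₀⟩ := List.Forall₂.exists_eq_map
      ((List.forall₂_map_left_iff.1 ih).imp fun a _ h => h a rfl)
    refine ⟨applyList e.head ts₀, by rw [embedFO_applyList], ?_⟩
    rw [← embedFO_applyList, isPPat_embedFO_iff] at hpat
    simpa only [applyList_head_args] using Deriv.dc (isSymb_embedFO_iff.1 hs) hpat hts₀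
  · obtain ⟨hhead, hargs⟩ := embedFO_eq_applyList he.symm trivial
    obtain ⟨f, hf, hrf⟩ := embedFO_eq_fn hhead
    obtain ⟨r₀, hr₀, rfl⟩ := hr.resolve_right fun hrQ =>
      Set.disjoint_left.1 hQ ⟨r, hrQ, rfl⟩ ⟨f, hrf.symm⟩
    obtain rfl : r₀.fn = f := Sum.inl_injective hrf
    obtain ⟨l₁, l₂, hl, rfl, rfl⟩ := List.map_eq_append_iff.1 hargs.symm
    have hlhs : Forall₂ (fun p a => subst θ (embedFO p) ∈ Set.range embedFO ∧
        Deriv P a (subst (unembedSubst θ) p)) r₀.lhs l₁ := by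
      simp only [embedRuleFO, List.map_map, List.forall₂_map_left_iff,
        List.forall₂_map_right_iff, Function.comp_apply] at ih
      refine (ih.imp fun a p h => ?_).flip
      obtain ⟨u, hu, hd⟩ := h a rfl
      exact ⟨⟨u, hu.symm⟩, eq_subst_unembedSubst_of_subst_embedFO hu ▸ hd⟩
    obtain ⟨hlhs, hprem⟩ := (List.forall₂_and_left _ _).1 hlhs
    obtain ⟨t₀, rfl, hd₀⟩ := ihd (applyList (subst (unembedSubst θ) r₀.rhs) l₂) <| by
      rw [embedFO_applyList, ← (hP r₀ hr₀).subst_embedFO_rhs hlhs]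
      rfl
    refine ⟨t₀, rfl, ?_⟩
    rw [← applyList_head_args e, hf, hl]
    exact .opr hr₀ hθ.unembedSubst (List.forall₂_map_right_iff.2 hprem.flip) hd₀

/-! ### The probe program -/

lemma isAtom_symExp (h : σ.FS ⊕ σ.CS) : (symExp h).IsAtom := by
  cases h <;> trivial

lemma symExp_injective : Function.Injective (symExp (σ := σ)) := by
  rintro (f | c) (f' | c') h <;> cases h <;> rfl

lemma head_applyList_symExp (h : σ.FS ⊕ σ.CS) (ts : List (Exp σ)) :
    (applyList (symExp h) ts).head = symExp h :=
  head_applyList (isAtom_symExp h) ts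

lemma hatFOAux_applyList (h : Exp σ) (l : List (Exp σ)) (n : ℕ) :
    hatFOAux (applyList h l) n = applyList (hatFOAux h (n + l.length)) (l.map hatFO) := by
  induction l generalizing h n with
  | nil => rfl
  | cons a l ih =>
      rw [applyList_cons, ih, List.length_cons, ← Nat.add_assoc]
      rfl

lemma hatFO_applyList_symExp (h : σ.FS ⊕ σ.CS) (ts : List (Exp σ)) :
    hatFO (applyList (symExp h) ts) =
      applyList (Exp.cn (σ := extSigFO σ) (.inr (h, ts.length))) (ts.map hatFO) := by
  rw [hatFO, hatFOAux_applyList, Nat.zero_add]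
  cases h <;> rfl

lemma hatFO_ne_bot (t : Exp σ) : hatFO t ≠ .bot := by
  cases t <;> simp [hatFO, hatFOAux]

lemma isFOPat_hatFO {t : Exp σ} (ht : IsPPat t) : IsFOPat (hatFO t) := by
  refine IsPPat.induction_symExp (fun x => .var x) ?_ (fun h ts _ ih => ?_) ht
  · exact .capp (σ := extSigFO σ) (.inl (.inr ())) [] rfl (by simp)
  · rw [hatFO_applyList_symExp]
    exact .capp (σ := extSigFO σ) (.inr (h, ts.length)) _ (List.length_map _)
      (by simpa using ih)

lemma PgFO.fn_eq_inr {r : Rule (extSigFO σ)} (hr : r ∈ PgFO σ) : ∃ t, r.fn = .inr t := by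
  rcases hr with ⟨x, rfl⟩ | rfl | ⟨h, ts, -, rfl⟩ <;> exact ⟨_, rfl⟩

lemma PgFO.length_lhs {r : Rule (extSigFO σ)} (hr : r ∈ PgFO σ) : r.lhs.length = 1 := by
  rcases hr with ⟨x, rfl⟩ | rfl | ⟨h, ts, -, rfl⟩ <;> rfl

lemma PgFO.eq_of_fn_eq {r r' : Rule (extSigFO σ)} (hr : r ∈ PgFO σ) (hr' : r' ∈ PgFO σ)
    (hfn : r.fn = r'.fn) : r = r' := by
  rcases hr with ⟨x, rfl⟩ | rfl | ⟨h, ts, -, rfl⟩ <;>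
    rcases hr' with ⟨x', rfl⟩ | rfl | ⟨h', ts', -, rfl⟩ <;>
    have hfn := Sum.inr_injective hfn
  -- the heads `x`, `⊥`, `symExp h` of the probed patterns are pairwise distinct
  all_goals first
    | (cases hfn <;> rfl)
    | (have := head_applyList_symExp h ts ▸ congrArg Exp.head hfn; cases h <;> cases this)
    | (have := head_applyList_symExp h' ts' ▸ congrArg Exp.head hfn; cases h' <;> cases this)
    | skip
  obtain ⟨hh, rfl⟩ := applyList_inj hfn (isAtom_symExp h) (isAtom_symExp h')
  rw [symExp_injective hh]

lemma defs_PgFO_subset : defs (PgFO σ) ⊆ Set.range Sum.inr := by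
  rintro _ ⟨r, hr, rfl⟩
  obtain ⟨t, ht⟩ := PgFO.fn_eq_inr hr
  exact ⟨t, ht.symm⟩

lemma subst_gAppRuleFO_lhs (θ : ℕ → Exp (extSigFO σ)) (h : σ.FS ⊕ σ.CS) (n : ℕ) :
    subst θ (applyList (embedFO (symExp h)) ((List.range n).map .var)) =
      applyList (embedFO (symExp h)) ((List.range n).map θ) := by
  rw [subst_applyList, List.map_map]
  cases h <;> rfl

lemma subst_gAppRuleFO_rhs (θ : ℕ → Exp (extSigFO σ)) (h : σ.FS ⊕ σ.CS) (ts : List (Exp σ)) :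
    subst θ (gAppRuleFO h ts).rhs = applyList (Exp.cn (σ := extSigFO σ) (.inr (h, ts.length)))
      (ts.mapIdx fun i t => .app (gEFO t) (θ i)) := by
  rw [gAppRuleFO, subst_applyList]
  congr 1
  exact List.ext_getElem (by simp) fun i _ _ => by simp [subst, gEFO]

def argSubstFO (ts : List (Exp σ)) (i : ℕ) : Exp (extSigFO σ) := embedFO (ts.getD i .bot)

lemma argSubstFO_of_lt {ts : List (Exp σ)} {i : ℕ} (hi : i < ts.length) :
    argSubstFO ts i = embedFO ts[i] := by
  rw [argSubstFO, List.getD_eq_getElem _ _ hi]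

lemma map_range_argSubstFO (ts : List (Exp σ)) :
    (List.range ts.length).map (argSubstFO ts) = ts.map embedFO :=
  List.ext_getElem (by simp) fun i _ hi => by
    rw [List.length_map] at hi
    simp [argSubstFO_of_lt hi]

lemma PSub.argSubstFO {ts : List (Exp σ)} (hts : ∀ t ∈ ts, IsPPat t) : PSub (argSubstFO ts) := by
  intro i
  rcases lt_or_ge i ts.length with hi | hi
  · rw [argSubstFO_of_lt hi, isPPat_embedFO_iff]
    exact hts _ (List.getElem_mem hi)
  · rw [_root_.argSubstFO, List.getD_eq_default _ _ hi]
    exact .bot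

section

variable {P : Program σ}

lemma arityF_le_length_lhs (hP : ∀ r ∈ P, σ.arityF r.fn ≤ r.lhs.length) :
    ∀ r ∈ embedProgFO P ∪ PgFO σ, (extSigFO σ).arityF r.fn ≤ r.lhs.length := by
  rintro r (⟨r₀, hr₀, rfl⟩ | hr)
  · rw [embedRuleFO, List.length_map]
    exact hP r₀ hr₀
  · obtain ⟨t, ht⟩ := PgFO.fn_eq_inr hr
    rw [PgFO.length_lhs hr, ht]
    rfl

lemma deriv_app_gEFO_iff {r : Rule (extSigFO σ)} (hr : r ∈ PgFO σ) {t : Exp σ}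
    (hfn : r.fn = .inr t) {q T : Exp (extSigFO σ)} (hT : T ≠ .bot) :
    Deriv (embedProgFO P ∪ PgFO σ) (.app (gEFO t) q) T ↔
      ∃ θ, PSub θ ∧ Forall₂ (Deriv (embedProgFO P ∪ PgFO σ)) [q] (r.lhs.map (subst θ)) ∧
        Deriv (embedProgFO P ∪ PgFO σ) (subst θ r.rhs) T := by
  constructor
  · intro hd
    obtain ⟨r', hr', hfn', θ, hθ, es₁, as, hes, hprem, hrhs⟩ :=
      Deriv.inv_applyList_fn (es := [q]) hd hT le_rfl
    have hr'g : r' ∈ PgFO σ := hr'.resolve_left (by rintro ⟨r₀, -, rfl⟩; cases hfn')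
    obtain rfl := PgFO.eq_of_fn_eq hr'g hr (hfn'.trans hfn.symm)
    obtain ⟨e₁, rfl⟩ := List.length_eq_one_iff.1 <| by
      rw [hprem.length_eq, List.length_map, PgFO.length_lhs hr]
    obtain ⟨rfl, rfl⟩ : q = e₁ ∧ as = [] := by simpa using hes
    exact ⟨θ, hθ, hprem, hrhs⟩
  · rintro ⟨θ, hθ, hq, hrhs⟩
    have := Deriv.opr (as := []) (Or.inr hr) hθ hq hrhs
    rwa [hfn] at this

lemma deriv_probe_of_deriv {t : Exp σ} (ht : IsPPat t) {e : Exp σ} (hd : Deriv P e t) :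
    Deriv (embedProgFO P ∪ PgFO σ) (.app (gEFO t) (embedFO e)) (hatFO t) := by
  have hemb {e t : Exp σ} (hd : Deriv P e t) :
      Deriv (embedProgFO P ∪ PgFO σ) (embedFO e) (embedFO t) :=
    hd.embed.mono Set.subset_union_left
  refine IsPPat.induction_symExp (motive := fun t => ∀ e, Deriv P e t →
      Deriv (embedProgFO P ∪ PgFO σ) (.app (gEFO t) (embedFO e)) (hatFO t))
    (fun x e hd => ?_) (fun e _ => ?_) (fun h ts hpat ih e hd => ?_) ht e hd
  · exact (deriv_app_gEFO_iff (Or.inl ⟨x, rfl⟩) rfl (hatFO_ne_bot _)).2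
      ⟨fun _ => .var x, fun _ => .var x, .cons (hemb hd) .nil, .rr x⟩
  · refine (deriv_app_gEFO_iff (Or.inr (Or.inl rfl)) rfl (hatFO_ne_bot _)).2
      ⟨fun _ => .bot, fun _ => .bot, .cons (.bot _) .nil, .refl ?_⟩
    exact .capp (σ := extSigFO σ) _ [] (Nat.zero_le _) (by simp)
  · have hts := ((isPPat_applyList_iff (isAtom_symExp h)).1 hpat).2
    refine (deriv_app_gEFO_iff (Or.inr (Or.inr ⟨h, ts, hpat, rfl⟩)) rfl
      (hatFO_ne_bot _)).2 ⟨argSubstFO ts, .argSubstFO hts, .cons ?_ .nil, ?_⟩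
    · rw [subst_gAppRuleFO_lhs, map_range_argSubstFO, ← embedFO_applyList]
      exact hemb hd
    · have hpat' := (isFOPat_hatFO hpat).isPPat
      rw [hatFO_applyList_symExp] at hpat' ⊢
      rw [subst_gAppRuleFO_rhs]
      refine .dc (ht := hpat') trivial (forall₂_iff_getElem.2 ⟨by simp, fun i hi _ => ?_⟩)
      rw [List.length_mapIdx] at hi
      simp only [List.getElem_mapIdx, List.getElem_map, argSubstFO_of_lt hi]
      exact ih _ (List.getElem_mem hi) _ (.refl (hts _ (List.getElem_mem hi)))

lemma deriv_of_deriv_probe (hP : ∀ r ∈ P, σ.arityF r.fn ≤ r.lhs.length) {t : Exp σ}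
    (ht : IsPPat t) {q : Exp (extSigFO σ)}
    (hd : Deriv (embedProgFO P ∪ PgFO σ) (.app (gEFO t) q) (hatFO t)) :
    Deriv (embedProgFO P ∪ PgFO σ) q (embedFO t) := by
  have happrox {p t : Exp (extSigFO σ)} :=
    approx_of_deriv (p := p) (t := t) (arityF_le_length_lhs hP)
  refine IsPPat.induction_symExp (motive := fun t => ∀ q,
      Deriv (embedProgFO P ∪ PgFO σ) (.app (gEFO t) q) (hatFO t) →
      Deriv (embedProgFO P ∪ PgFO σ) q (embedFO t))
    (fun x q hd => ?_) (fun q _ => .bot q) (fun h ts hpat ih q hd => ?_) ht q hd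
  · obtain ⟨θ, hθ, hq, hrhs⟩ :=
      (deriv_app_gEFO_iff (Or.inl ⟨x, rfl⟩) rfl (hatFO_ne_bot _)).1 hd
    have hθ0 : θ 0 = .var x := (happrox hrhs (hθ 0)).eq_of_var
    simpa [subst, hθ0, embedFO] using hq
  · obtain ⟨θ, hθ, hq, hrhs⟩ := (deriv_app_gEFO_iff (Or.inr (Or.inr ⟨h, ts, hpat, rfl⟩)) rfl
      (hatFO_ne_bot _)).1 hd
    rw [subst_gAppRuleFO_rhs] at hrhs
    obtain ⟨ts', hts', hargs⟩ := hrhs.inv_applyList_cn (hatFO_ne_bot _)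
    rw [hatFO_applyList_symExp] at hts'
    obtain ⟨-, rfl⟩ := applyList_inj hts' trivial trivial
    have hargs' : Forall₂ Approx (ts.map embedFO) ((List.range ts.length).map θ) := by
      refine forall₂_iff_getElem.2 ⟨by simp, fun i hi _ => ?_⟩
      rw [List.length_map] at hi
      have := (forall₂_iff_getElem.1 hargs).2 i (by simpa using hi) (by simpa using hi)
      simp only [List.getElem_mapIdx, List.getElem_map, List.getElem_range] at this ⊢
      exact happrox (ih _ (List.getElem_mem hi) _ this) (hθ i)
    have hq : Deriv _ q _ := (List.forall₂_cons.1 hq).1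
    rw [subst_gAppRuleFO_lhs] at hq
    refine hq.of_approx ?_ (isPPat_embedFO_iff.2 hpat)
    rw [embedFO_applyList]
    exact approx_applyList (.refl _) hargs'

end

/-! ### Safe extension -/

lemma expFS_embedFO_subset (e : Exp σ) : expFS (embedFO e) ⊆ Set.range Sum.inl := by
  induction e with
  | fn f => exact Set.singleton_subset_iff.2 ⟨f, rfl⟩
  | app a b iha ihb => exact Set.union_subset iha ihb
  | _ => simp [embedFO, expFS]

lemma progFS_embedProgFO_subset (P : Program σ) :
    progFS (embedProgFO P) ⊆ Set.range Sum.inl := by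
  refine Set.iUnion₂_subset ?_
  rintro _ ⟨r, -, rfl⟩
  refine Set.insert_subset ⟨r.fn, rfl⟩ (Set.union_subset (Set.iUnion₂_subset fun t ht => ?_)
    (expFS_embedFO_subset _))
  obtain ⟨t, -, rfl⟩ := List.mem_map.1 ht
  exact expFS_embedFO_subset t

lemma safeExt_PgFO (P : Program σ) (e : Exp σ) :
    SafeExt (embedProgFO P) (embedProgFO P ∪ PgFO σ) (embedFO e) := by
  refine ⟨PgFO σ, rfl, Set.disjoint_left.2 ?_, Set.disjoint_of_subset defs_PgFO_subset
    (Set.union_subset (expFS_embedFO_subset e) (progFS_embedProgFO_subset P))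
    Set.isCompl_range_inl_range_inr.disjoint.symm⟩
  rintro _ ⟨r, -, rfl⟩ hr
  obtain ⟨t, ht⟩ := PgFO.fn_eq_inr hr
  cases ht

/-- **First-order pattern probing lemma**: `t̂` is always a first-order pattern,
`P' = P ⊎ P_{g_t}` is a safe extension of `(P, e)` and, for every expression
`e` and partial pattern `t` built with the signature of `P`,
`t ∈ ⟦e⟧^P` iff `t̂ ∈ ⟦g_t e⟧^{P'}`. -/
theorem pattern_probing_FO (σ : Sig) (P : Program σ) (hP : WFProg P) :
    (∀ t : Exp σ, IsPPat t → IsFOPat (hatFO t)) ∧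
    (∀ e : Exp σ, SafeExt (embedProgFO P) (embedProgFO P ∪ PgFO σ) (embedFO e)) ∧
    (∀ (e t : Exp σ), IsPPat t →
      (t ∈ den P e ↔
        hatFO t ∈ den (embedProgFO P ∪ PgFO σ) (Exp.app (gEFO t) (embedFO e)))) := by
  refine ⟨fun t ht => isFOPat_hatFO ht, safeExt_PgFO P, fun e t ht => ⟨?_, ?_⟩⟩
  · rintro ⟨-, hd⟩
    exact ⟨(isFOPat_hatFO ht).isPPat, deriv_probe_of_deriv ht hd⟩
  · rintro ⟨-, hd⟩
    have hdefs : Disjoint (defs (PgFO σ)) (Set.range Sum.inl) :=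
      Set.disjoint_of_subset_left defs_PgFO_subset Set.isCompl_range_inl_range_inr.disjoint.symm
    obtain ⟨t₀, he, hd₀⟩ := (deriv_of_deriv_probe (fun r hr => (hP r hr).1.1.ge) ht hd).conservative
      (fun r hr => (hP r hr).2) hdefs
    exact ⟨ht, embedFO_injective he ▸ hd₀⟩
end

section
/- Extra variables destroy safe-extension invariance (Example 2, first part): with FS = {f/1, g/1}, CS = {0/0, 1/0} and the program P = { f X → Y X } (note the extra variable Y in the right-hand side), one has ⟦f 0⟧^P = {⊥} = ⟦f 1⟧^P. -/
variable {σ : Sig}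

/-- Function symbols of the Example 2 program: `f/1`, `g/1`. -/
inductive Ex2F where | f | g

/-- Constructor symbols of the Example 2 program: `0/0`, `1/0`. -/
inductive Ex2C where | c0 | c1

/-- The signature of the Example 2 program. -/
def ex2Sig : Sig where
  FS := Ex2F
  CS := Ex2C
  arityF := fun s => match s with | .f => 1 | .g => 1
  arityC := fun s => match s with | .c0 => 0 | .c1 => 0

/-- The Example 2 program `P = { f X → Y X }` (extra variable `Y`). -/
def ex2Prog : Program ex2Sig :=
  {⟨.f, [.var 0], .app (.var 1) (.var 0)⟩}

def Sig.Flat (σ : Sig) : Prop := (∀ c, σ.arityC c = 0) ∧ ∀ f, σ.arityF f ≤ 1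

def Exp.IsApp (e : Exp σ) : Prop := ∃ a b, e = .app a b

theorem Exp.IsApp.applyList {e : Exp σ} (he : e.IsApp) (es : List (Exp σ)) :
    (applyList e es).IsApp := by
  induction es generalizing e with
  | nil => exact he
  | cons a es ih => exact ih ⟨e, a, rfl⟩

theorem Exp.isApp_applyList_of_ne_nil (e : Exp σ) {es : List (Exp σ)} (hes : es ≠ []) :
    (applyList e es).IsApp := by
  obtain ⟨a, es, rfl⟩ := List.exists_cons_of_ne_nil hes
  exact Exp.IsApp.applyList ⟨e, a, rfl⟩ es

theorem IsSymb.not_isApp {h : Exp σ} (hh : IsSymb h) : ¬ h.IsApp := by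
  rintro ⟨a, b, rfl⟩
  exact hh

theorem IsPPat.not_isApp (hσ : σ.Flat) {t : Exp σ} (ht : IsPPat t) : ¬ t.IsApp := by
  cases ht with
  | var x => rintro ⟨_, _, ⟨⟩⟩
  | bot => rintro ⟨_, _, ⟨⟩⟩
  | capp c ts har =>
    have : ts = [] := List.length_eq_zero_iff.mp (Nat.le_zero.mp (hσ.1 c ▸ har))
    subst this
    rintro ⟨_, _, ⟨⟩⟩
  | fapp s ts har =>
    have : ts = [] := List.length_eq_zero_iff.mp (by have := hσ.2 s; omega)
    subst this
    rintro ⟨_, _, ⟨⟩⟩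

/-- (DC) cannot derive anything from an application, since no partial pattern is one, and (OR)
only leads to further applications; so (B) is the only way out. -/
theorem DTree.eq_bot_of_isApp {P : Program σ} (hσ : σ.Flat) (hP : ∀ r ∈ P, r.rhs.IsApp)
    {e t : Exp σ} (d : DTree P e t) (he : e.IsApp) : t = .bot := by
  induction d with
  | bot => rfl
  | rr x => obtain ⟨_, _, ⟨⟩⟩ := he
  | dc h es ts hsym hlen hpat =>
    have hes : es ≠ [] := by
      rintro rfl
      exact hsym.not_isApp he
    have hts : ts ≠ [] := by
      rintro rfl
      exact hes (List.length_eq_zero_iff.mp hlen)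
    exact absurd (Exp.isApp_applyList_of_ne_nil h hts) (hpat.not_isApp hσ)
  | opr r hr θ _ _ as _ _ _ _ _ ih =>
    obtain ⟨a, b, hab⟩ := hP r hr
    rw [hab] at ih
    exact ih (Exp.IsApp.applyList ⟨subst θ a, subst θ b, rfl⟩ as)

theorem den_eq_singleton_bot_of_isApp {P : Program σ} (hσ : σ.Flat)
    (hP : ∀ r ∈ P, r.rhs.IsApp) {e : Exp σ} (he : e.IsApp) : den P e = {Exp.bot} := by
  ext t
  constructor
  · rintro ⟨_, ⟨d⟩⟩
    exact d.eq_bot_of_isApp hσ hP he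
  · rintro rfl
    exact ⟨.bot, ⟨.bot e⟩⟩

theorem ex2Sig_flat : ex2Sig.Flat :=
  ⟨fun c => by cases c <;> rfl, fun s => by cases s <;> decide⟩

theorem ex2Prog_rhs_isApp : ∀ r ∈ ex2Prog, r.rhs.IsApp := by
  rintro r rfl
  exact ⟨_, _, rfl⟩

/-- **Example 2, first part**: with `P = { f X → Y X }` (extra variable `Y`),
`⟦f 0⟧^P = {⊥} = ⟦f 1⟧^P`. -/
theorem ex2_den_bot :
    den ex2Prog (.app (.fn .f) (.cn .c0)) = {Exp.bot} ∧
    den ex2Prog (.app (.fn .f) (.cn .c1)) = {Exp.bot} :=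
  ⟨den_eq_singleton_bot_of_isApp ex2Sig_flat ex2Prog_rhs_isApp ⟨_, _, rfl⟩,
    den_eq_singleton_bot_of_isApp ex2Sig_flat ex2Prog_rhs_isApp ⟨_, _, rfl⟩⟩
end

section
/- Extra variables destroy safe-extension invariance (Example 2, second part): with FS = {f/1, g/1}, CS = {0/0, 1/0}, P = { f X → Y X } and P' = P ⊎ { g 0 → 1 } (a safe extension of (P, f 0) and of (P, f 1)), one has 1 ∈ ⟦f 0⟧^{P'} but 1 ∉ ⟦f 1⟧^{P'}; hence ⟦f 0⟧^{P'} ≠ ⟦f 1⟧^{P'} although ⟦f 0⟧^P = ⟦f 1⟧^P, so the safe-extension lemma and full abstraction fail in the presence of extra variables. -/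
variable {σ : Sig}

/-- The safe extension `P' = P ⊎ { g 0 → 1 }`. -/
def ex2Prog' : Program ex2Sig :=
  ex2Prog ∪ {⟨.g, [.cn .c0], .cn .c1⟩}

/-!
With the extra variable `Y` instantiated to `g`, the rule `f X → Y X` lets `f 0` reach
`g 0`, which the new rule `g 0 → 1` rewrites to `1`; no rule of `P'` fires on `g 1`, so
`f 1` never reaches `1`. In `P` the only defined function is `f`, so instantiating `Y`
leads at best back to `f`, and `f u` derives nothing but `⊥`, whatever `u`.
-/

section General

variable {σ : Sig}

theorem applyList_append_singleton (h : Exp σ) (l : List (Exp σ)) (x : Exp σ) :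
    applyList h (l ++ [x]) = .app (applyList h l) x := by
  simp [applyList]

theorem eq_of_applyList_eq {h v : Exp σ} {es : List (Exp σ)}
    (hv : ∀ a b, v ≠ .app a b) (he : applyList h es = v) : h = v ∧ es = [] := by
  induction es using List.reverseRecOn with
  | nil => exact ⟨he, rfl⟩
  | append_singleton l x _ =>
    rw [applyList_append_singleton] at he
    exact absurd he.symm (hv _ _)

theorem applyList_eq_app {h a b : Exp σ} {es : List (Exp σ)}
    (he : applyList h es = .app a b) :
    (es = [] ∧ h = .app a b) ∨ ∃ l, es = l ++ [b] ∧ applyList h l = a := by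
  induction es using List.reverseRecOn with
  | nil => exact .inl ⟨rfl, he⟩
  | append_singleton l x _ =>
    rw [applyList_append_singleton, Exp.app.injEq] at he
    exact .inr ⟨l, by rw [he.2], he.1⟩

theorem eq_of_applyList_fn_append_eq_app_fn {f h : σ.FS} {es as : List (Exp σ)} {u : Exp σ}
    (hes : es.length = 1) (he : applyList (.fn f) (es ++ as) = .app (.fn h) u) :
    f = h ∧ es = [u] ∧ as = [] := by
  rcases applyList_eq_app he with ⟨-, hfn⟩ | ⟨l, hl, hfl⟩
  · cases hfn
  obtain ⟨hfh, rfl⟩ := eq_of_applyList_eq (by simp) hfl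
  obtain ⟨x, rfl⟩ := List.length_eq_one_iff.mp hes
  simp_all

theorem isPPat_cn (c : σ.CS) : IsPPat (Exp.cn c) :=
  IsPPat.capp c [] (Nat.zero_le _) (by simp)

theorem isPPat_fn {f : σ.FS} (hf : 0 < σ.arityF f) : IsPPat (Exp.fn f) :=
  IsPPat.fapp f [] hf (by simp)

theorem Deriv.refl_cn (P : Program σ) (c : σ.CS) : Deriv P (.cn c) (.cn c) :=
  ⟨DTree.dc (.cn c) [] [] trivial rfl (isPPat_cn c) (fun _ hp => by simp at hp)⟩

theorem Deriv.app_of_mem {P : Program σ} {r : Rule σ} (hr : r ∈ P) {p : Exp σ}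
    (hp : r.lhs = [p]) {θ : ℕ → Exp σ} (hθ : PSub θ) {e t : Exp σ}
    (he : Deriv P e (subst θ p)) (ht : Deriv P (subst θ r.rhs) t) :
    Deriv P (.app (.fn r.fn) e) t := by
  obtain ⟨de⟩ := he
  obtain ⟨dt⟩ := ht
  refine ⟨DTree.opr r hr θ hθ [e] [] t (by simp [hp]) (fun q hq => ?_) dt⟩
  rw [hp] at hq
  obtain rfl : q = (e, subst θ p) := by simpa using hq
  exact de

theorem DTree.eq_bot_or_eq_of_isSymb {P : Program σ} {e t : Exp σ} (d : DTree P e t)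
    (hs : IsSymb e) (hf : ∀ f, e ≠ .fn f) : t = .bot ∨ t = e := by
  have hna : ∀ a b, e ≠ .app a b := by
    rintro a b rfl
    exact hs
  cases d with
  | bot => exact .inl rfl
  | rr => exact hs.elim
  | dc h es ts _ hlen =>
    obtain ⟨-, rfl⟩ := eq_of_applyList_eq hna rfl
    obtain rfl : ts = [] := List.eq_nil_of_length_eq_zero hlen.symm
    exact .inr rfl
  | opr r =>
    exact absurd (eq_of_applyList_eq hna rfl).1.symm (hf r.fn)

end General

section Ex2

theorem ex2Sig_g_ne_f : (Ex2F.g : ex2Sig.FS) ≠ Ex2F.f := nofun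

theorem IsPPat.ne_app_of_ex2Sig {p a b : Exp ex2Sig} (hp : IsPPat p) : p ≠ .app a b := by
  cases hp with
  | var | bot => simp
  | capp c ts har =>
    obtain rfl : ts = [] :=
      List.eq_nil_of_length_eq_zero (by cases c <;> simpa [ex2Sig] using har)
    simp [applyList]
  | fapp k ts har =>
    obtain rfl : ts = [] :=
      List.eq_nil_of_length_eq_zero (by cases k <;> simpa [ex2Sig] using har)
    simp [applyList]

/-- In `ex2Sig` no partial pattern is an application, so (DC) never derives from one. -/
theorem applyList_ne_app_of_ex2Sig {h : Exp ex2Sig} {es ts : List (Exp ex2Sig)}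
    (hsym : IsSymb h) (hlen : es.length = ts.length) (hpat : IsPPat (applyList h ts))
    (a w : Exp ex2Sig) : applyList h es ≠ .app a w := by
  intro he
  rcases applyList_eq_app he with ⟨-, rfl⟩ | ⟨l, rfl, -⟩
  · exact hsym
  rcases List.eq_nil_or_concat ts with rfl | ⟨l', x, rfl⟩
  · simp at hlen
  · rw [List.concat_eq_append] at hpat
    exact hpat.ne_app_of_ex2Sig (applyList_append_singleton h l' x)

theorem DTree.eq_bot_of_app_of_ne_fn {P : Program ex2Sig} {a w t : Exp ex2Sig}
    (d : DTree P (.app a w) t) (ha : IsPPat a) (hf : ∀ k, a ≠ .fn k) : t = .bot := by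
  generalize he : Exp.app a w = e at d
  cases d with
  | bot => rfl
  | rr => cases he
  | dc h es ts hsym hlen hpat =>
    exact absurd he.symm (applyList_ne_app_of_ex2Sig hsym hlen hpat a w)
  | opr r =>
    rcases applyList_eq_app he.symm with ⟨-, hfn⟩ | ⟨l, -, hl⟩
    · cases hfn
    · exact absurd (eq_of_applyList_eq (fun _ _ => ha.ne_app_of_ex2Sig) hl).1.symm (hf r.fn)

theorem DTree.eq_bot_of_ex2Prog {h : Ex2F} {u t : Exp ex2Sig}
    (d : DTree ex2Prog (.app (.fn h) u) t) : t = .bot := by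
  generalize he : Exp.app (.fn h) u = e at d
  induction d generalizing h u with
  | bot => rfl
  | rr => cases he
  | dc h es ts hsym hlen hpat =>
    exact absurd he.symm (applyList_ne_app_of_ex2Sig hsym hlen hpat _ _)
  | opr r hr θ hθ es as t hlen _ d _ ih =>
    obtain rfl : r = _ := hr
    obtain ⟨-, -, rfl⟩ := eq_of_applyList_fn_append_eq_app_fn hlen he.symm
    by_cases hf : ∃ k, θ 1 = .fn k
    · obtain ⟨k, hk⟩ := hf
      exact ih (h := k) (u := θ 0) (by simp [subst, applyList, hk])
    · simp only [not_exists] at hf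
      exact d.eq_bot_of_app_of_ne_fn (a := θ 1) (w := θ 0) (hθ 1) hf

theorem DTree.ne_cn_c1_of_ex2Prog' {h : Ex2F} {u t : Exp ex2Sig}
    (d : DTree ex2Prog' (.app (.fn h) u) t) (hu : u = .cn .c1 ∨ u = .bot) :
    t ≠ .cn .c1 := by
  generalize he : Exp.app (.fn h) u = e at d
  induction d generalizing h u with
  | bot => simp
  | rr => cases he
  | dc h es ts hsym hlen hpat =>
    exact absurd he.symm (applyList_ne_app_of_ex2Sig hsym hlen hpat _ _)
  | opr r hr θ hθ es as t hlen ds d _ ih =>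
    have hr' :
        r = ⟨.g, [.cn .c0], .cn .c1⟩ ∨ r = ⟨.f, [.var 0], .app (.var 1) (.var 0)⟩ := by
      simpa [ex2Prog', ex2Prog] using hr
    have hu_symb : IsSymb u ∧ ∀ k, u ≠ .fn k := by rcases hu with rfl | rfl <;> simp [IsSymb]
    rcases hr' with rfl | rfl
    · obtain ⟨-, rfl, rfl⟩ := eq_of_applyList_fn_append_eq_app_fn hlen he.symm
      have d0 : DTree ex2Prog' u (.cn .c0) := ds (u, .cn .c0) (by simp [subst])
      have hc0 := d0.eq_bot_or_eq_of_isSymb hu_symb.1 hu_symb.2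
      rcases hu with rfl | rfl <;> rcases hc0 with h0 | h0 <;> cases h0
    · obtain ⟨-, rfl, rfl⟩ := eq_of_applyList_fn_append_eq_app_fn hlen he.symm
      have hθ0 : θ 0 = .cn .c1 ∨ θ 0 = .bot := by
        have d0 : DTree ex2Prog' u (θ 0) := ds (u, θ 0) (by simp [subst])
        rcases d0.eq_bot_or_eq_of_isSymb hu_symb.1 hu_symb.2 with h0 | h0
        · exact .inr h0
        · exact h0 ▸ hu
      by_cases hf : ∃ k, θ 1 = .fn k
      · obtain ⟨k, hk⟩ := hf
        exact ih (h := k) (u := θ 0) hθ0 (by simp [subst, applyList, hk])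
      · simp only [not_exists] at hf
        simp [d.eq_bot_of_app_of_ne_fn (a := θ 1) (w := θ 0) (hθ 1) hf]

theorem den_ex2Prog_app_fn (h : Ex2F) (u : Exp ex2Sig) :
    den ex2Prog (.app (.fn h) u) = {.bot} := by
  ext t
  constructor
  · rintro ⟨-, ⟨d⟩⟩
    exact d.eq_bot_of_ex2Prog
  · rintro rfl
    exact ⟨.bot, ⟨.bot _⟩⟩

theorem cn_c1_mem_den_ex2Prog'_f_c0 :
    Exp.cn Ex2C.c1 ∈ den ex2Prog' (.app (.fn .f) (.cn .c0)) := by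
  refine ⟨isPPat_cn _, ?_⟩
  have hθ : PSub (σ := ex2Sig) fun n => if n = 1 then .fn .g else .cn .c0 := by
    intro n
    dsimp only
    split
    · exact isPPat_fn (σ := ex2Sig) (f := Ex2F.g) Nat.one_pos
    · exact isPPat_cn _
  refine Deriv.app_of_mem (r := (⟨.f, [.var 0], .app (.var 1) (.var 0)⟩ : Rule ex2Sig))
    (by simp [ex2Prog', ex2Prog]) rfl hθ (Deriv.refl_cn _ _) ?_
  exact Deriv.app_of_mem (r := (⟨.g, [.cn .c0], .cn .c1⟩ : Rule ex2Sig)) (by simp [ex2Prog'])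
    rfl (θ := fun _ => .bot) (fun _ => .bot) (Deriv.refl_cn _ _) (Deriv.refl_cn _ _)

theorem cn_c1_not_mem_den_ex2Prog'_f_c1 :
    Exp.cn Ex2C.c1 ∉ den ex2Prog' (.app (.fn .f) (.cn .c1)) := by
  rintro ⟨-, ⟨d⟩⟩
  exact d.ne_cn_c1_of_ex2Prog' (.inl rfl) rfl

theorem progFS_ex2Prog : progFS ex2Prog = {Ex2F.f} := by
  ext k
  simp [progFS, ruleFS, ex2Prog, expFS]
  exact or_iff_left id

theorem safeExt_ex2Prog' {e : Exp ex2Sig} (he : Ex2F.g ∉ expFS e) :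
    SafeExt ex2Prog ex2Prog' e := by
  refine ⟨{⟨.g, [.cn .c0], .cn .c1⟩}, rfl, ?_, ?_⟩
  · rw [ex2Prog, Set.disjoint_singleton]
    exact fun h => ex2Sig_g_ne_f (congrArg Rule.fn h).symm
  · rw [defs, Set.image_singleton, Set.disjoint_singleton_left, progFS_ex2Prog]
    rintro (h | h)
    exacts [he h, ex2Sig_g_ne_f h]

end Ex2

/-- **Example 2, second part**: `P' = P ⊎ { g 0 → 1 }` is a safe extension of
`(P, f 0)` and of `(P, f 1)`, and `1 ∈ ⟦f 0⟧^{P'}` but `1 ∉ ⟦f 1⟧^{P'}`; hence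
`⟦f 0⟧^{P'} ≠ ⟦f 1⟧^{P'}` although `⟦f 0⟧^P = ⟦f 1⟧^P`: the safe-extension
lemma and full abstraction fail in the presence of extra variables. -/
theorem ex2_safeExt_fails :
    SafeExt ex2Prog ex2Prog' (.app (.fn .f) (.cn .c0)) ∧
    SafeExt ex2Prog ex2Prog' (.app (.fn .f) (.cn .c1)) ∧
    (Exp.cn Ex2C.c1 ∈ den ex2Prog' (.app (.fn .f) (.cn .c0))) ∧
    (Exp.cn Ex2C.c1 ∉ den ex2Prog' (.app (.fn .f) (.cn .c1))) ∧
    den ex2Prog' (.app (.fn .f) (.cn .c0)) ≠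
      den ex2Prog' (.app (.fn .f) (.cn .c1)) ∧
    den ex2Prog (.app (.fn .f) (.cn .c0)) =
      den ex2Prog (.app (.fn .f) (.cn .c1)) := by
  have hg : ∀ c, Ex2F.g ∉ expFS (σ := ex2Sig) (.app (.fn .f) (.cn c)) := by
    rintro c (h | h)
    exacts [ex2Sig_g_ne_f h, h]
  refine ⟨safeExt_ex2Prog' (hg _), safeExt_ex2Prog' (hg _), cn_c1_mem_den_ex2Prog'_f_c0,
    cn_c1_not_mem_den_ex2Prog'_f_c1, fun h => ?_, by rw [den_ex2Prog_app_fn, den_ex2Prog_app_fn]⟩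
  exact cn_c1_not_mem_den_ex2Prog'_f_c1 (h ▸ cn_c1_mem_den_ex2Prog'_f_c0)
end
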